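/- Let ψ, φ be of class P, let p : ℝ≥0 → ℝ≥0 be locally integrable, and let θ > 0 be such that M := sup_{a>0} ∫_a^{ψ(a)} ds/φ(s) < inf_{t≥0} ∫_t^{t+θ} p(s) ds =: N. If M > 0, then the comparison system is strongly GUAS uniformly over any S ⊂ Γ that is a uniform subset of Sup(1/θ). -/

import Mathlib

open Set Filter MeasureTheory

noncomputable section

/-- An impulse-time sequence, modeled as a subset of `(0,∞)` whose intersection with any
half-line `(-∞, t]` is finite (equivalently: a strictly increasing, finite or infinite,
sequence of positive reals with no finite limit point). -/
def IsImpulseSeq (γ : Set ℝ) : Prop :=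
  γ ⊆ Set.Ioi (0 : ℝ) ∧ ∀ t : ℝ, (γ ∩ Set.Iic t).Finite

/-- `impCnt γ s t` is the number `n^γ_{(s,t]}` of impulse times in the interval `(s, t]`. -/
def impCnt (γ : Set ℝ) (s t : ℝ) : ℕ := (γ ∩ Set.Ioc s t).ncard

/-- The class `Sup(ρ)` of impulse-time sequences whose impulse frequency is eventually
uniformly upper bounded by `ρ`. -/
def MemSup (ρ : ℝ) (γ : Set ℝ) : Prop :=
  IsImpulseSeq γ ∧ ∀ ε : ℝ, 0 < ε → ∃ T : ℝ, 0 < T ∧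
    ∀ t : ℝ, T ≤ t → ∀ s : ℝ, 0 ≤ s → (impCnt γ s (s + t) : ℝ) / t ≤ ρ + ε

/-- The class `Sdn(ρ)` of impulse-time sequences whose impulse frequency is eventually
uniformly lower bounded by `ρ`. -/
def MemSdn (ρ : ℝ) (γ : Set ℝ) : Prop :=
  IsImpulseSeq γ ∧ ∀ ε : ℝ, 0 < ε → ∃ T : ℝ, 0 < T ∧
    ∀ t : ℝ, T ≤ t → ∀ s : ℝ, 0 ≤ s → ρ - ε ≤ (impCnt γ s (s + t) : ℝ) / t

/-- `S` is a uniform subset of `Sup(ρ)`: the time `T` can be chosen independently of `γ ∈ S`. -/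
def USubSup (ρ : ℝ) (S : Set (Set ℝ)) : Prop :=
  (∀ γ ∈ S, IsImpulseSeq γ) ∧ ∀ ε : ℝ, 0 < ε → ∃ T : ℝ, 0 < T ∧
    ∀ γ ∈ S, ∀ t : ℝ, T ≤ t → ∀ s : ℝ, 0 ≤ s → (impCnt γ s (s + t) : ℝ) / t ≤ ρ + ε

/-- `S` is a uniform subset of `Sdn(ρ)`: the time `T` can be chosen independently of `γ ∈ S`. -/
def USubSdn (ρ : ℝ) (S : Set (Set ℝ)) : Prop :=
  (∀ γ ∈ S, IsImpulseSeq γ) ∧ ∀ ε : ℝ, 0 < ε → ∃ T : ℝ, 0 < T ∧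
    ∀ γ ∈ S, ∀ t : ℝ, T ≤ t → ∀ s : ℝ, 0 ≤ s → ρ - ε ≤ (impCnt γ s (s + t) : ℝ) / t

/-- The average dwell-time class `Sad(n, τ)`. -/
def MemSad (n : ℕ) (τ : ℝ) (γ : Set ℝ) : Prop :=
  IsImpulseSeq γ ∧ ∀ s t : ℝ, 0 ≤ s → s ≤ t → (impCnt γ s t : ℝ) ≤ (n : ℝ) + (t - s) / τ

/-- The reverse average dwell-time class `Srad(n, τ)`. -/
def MemSrad (n : ℕ) (τ : ℝ) (γ : Set ℝ) : Prop :=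
  IsImpulseSeq γ ∧ ∀ s t : ℝ, 0 ≤ s → s ≤ t → -(n : ℝ) + (t - s) / τ ≤ (impCnt γ s t : ℝ)

/-- A function of class `P`: continuous on `[0,∞)`, zero at zero, and positive on `(0,∞)`. -/
def ClassP (α : ℝ → ℝ) : Prop :=
  ContinuousOn α (Set.Ici 0) ∧ α 0 = 0 ∧ ∀ s : ℝ, 0 < s → 0 < α s

/-- `p : [0,∞) → [0,∞)` is nonnegative and locally (Lebesgue) integrable. -/
def LocIntNN (p : ℝ → ℝ) : Prop :=
  (∀ s : ℝ, 0 ≤ p s) ∧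
    ∀ a b : ℝ, 0 ≤ a → a ≤ b → IntervalIntegrable p MeasureTheory.volume a b

/-- A function of class `KL`: continuous on `[0,∞)×[0,∞)`, nonnegative there, for each fixed
`t ≥ 0` strictly increasing in the first argument with value `0` at `0`, for each fixed
`r ≥ 0` strictly decreasing in the second argument whenever positive, and tending to `0` as
the second argument tends to `∞`. -/
def ClassKL (β : ℝ → ℝ → ℝ) : Prop :=
  ContinuousOn (fun q : ℝ × ℝ => β q.1 q.2) (Set.Ici 0 ×ˢ Set.Ici 0) ∧
  (∀ r t : ℝ, 0 ≤ r → 0 ≤ t → 0 ≤ β r t) ∧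
  (∀ t : ℝ, 0 ≤ t → StrictMonoOn (fun r => β r t) (Set.Ici 0) ∧ β 0 t = 0) ∧
  (∀ r : ℝ, 0 ≤ r → ∀ t1 t2 : ℝ, 0 ≤ t1 → t1 < t2 → 0 < β r t1 → β r t2 < β r t1) ∧
  (∀ r : ℝ, 0 ≤ r → Filter.Tendsto (fun t => β r t) Filter.atTop (nhds 0))

/-- `z : [t0, T) → [0,∞)` is a solution of the comparison system
`ż(t) ∈ (−∞, −p(t)φ(z(t))]` for `t ∉ γ`, `z(t) ∈ [0, ψ(z(t⁻))]` for `t ∈ γ`,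
with `z(t0) = z0` (the right endpoint `T` is an extended real, `T = ⊤` meaning a
solution defined on all of `[t0,∞)`).  Between impulse times `z` is continuous, and its
local absolute continuity together with `z' ≤ −p·φ∘z` a.e. is encoded by the integral
inequality `z(b) − z(a) ≤ −∫_a^b p(s)φ(z(s)) ds` on impulse-free subintervals;
at each impulse time in `(t0, T)` the left limit exists and the jump condition holds. -/
structure IsCompSol (p φ ψ : ℝ → ℝ) (γ : Set ℝ) (t0 : ℝ) (T : EReal) (z0 : ℝ)
    (z : ℝ → ℝ) : Prop where
  dom : (t0 : EReal) < T
  init : z t0 = z0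
  nonneg : ∀ t : ℝ, t0 ≤ t → (t : EReal) < T → 0 ≤ z t
  flow_cont : ∀ a b : ℝ, t0 ≤ a → a ≤ b → (b : EReal) < T → γ ∩ Set.Ioc a b = ∅ →
    ContinuousOn z (Set.Icc a b)
  flow_int : ∀ a b : ℝ, t0 ≤ a → a ≤ b → (b : EReal) < T → γ ∩ Set.Ioc a b = ∅ →
    IntervalIntegrable (fun s => p s * φ (z s)) MeasureTheory.volume a b ∧
      z b - z a ≤ - ∫ s in a..b, p s * φ (z s)
  jump : ∀ τ ∈ γ, t0 < τ → (τ : EReal) < T →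
    ∃ L : ℝ, Filter.Tendsto z (nhdsWithin τ (Set.Iio τ)) (nhds L) ∧ z τ ≤ ψ L

/-- The comparison system is weakly GUAS uniformly over the family `S` of impulse-time
sequences. -/
def WeakGUAS (p φ ψ : ℝ → ℝ) (S : Set (Set ℝ)) : Prop :=
  ∃ β : ℝ → ℝ → ℝ, ClassKL β ∧
    ∀ γ ∈ S, ∀ t0 : ℝ, 0 ≤ t0 → ∀ z0 : ℝ, 0 ≤ z0 → ∀ (T : EReal) (z : ℝ → ℝ),
      IsCompSol p φ ψ γ t0 T z0 z →
        ∀ t : ℝ, t0 ≤ t → (t : EReal) < T → z t ≤ β z0 (t - t0)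

/-- The comparison system is strongly GUAS uniformly over the family `S` of impulse-time
sequences (the decay also counts the number of impulses). -/
def StrongGUAS (p φ ψ : ℝ → ℝ) (S : Set (Set ℝ)) : Prop :=
  ∃ β : ℝ → ℝ → ℝ, ClassKL β ∧
    ∀ γ ∈ S, ∀ t0 : ℝ, 0 ≤ t0 → ∀ z0 : ℝ, 0 ≤ z0 → ∀ (T : EReal) (z : ℝ → ℝ),
      IsCompSol p φ ψ γ t0 T z0 z →
        ∀ t : ℝ, t0 ≤ t → (t : EReal) < T →
          z t ≤ β z0 (t - t0 + (impCnt γ t0 t : ℝ))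

/-- `S` is uniformly incrementally bounded (UIB). -/
def UIB (S : Set (Set ℝ)) : Prop :=
  ∃ φ₀ : ℝ → ℝ, ContinuousOn φ₀ (Set.Ioi 0) ∧ MonotoneOn φ₀ (Set.Ioi 0) ∧
    ∀ γ ∈ S, ∀ s t : ℝ, 0 ≤ s → s < t → (impCnt γ s t : ℝ) ≤ φ₀ (t - s)

/-- `M = sup_{a > 0} ∫_a^{ψ(a)} ds/φ(s)`. -/
def Mval (φ ψ : ℝ → ℝ) : ℝ :=
  sSup {y : ℝ | ∃ a : ℝ, 0 < a ∧ y = ∫ s in a..(ψ a), 1 / φ s}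

/-- `N = inf_{t ≥ 0} ∫_t^{t+θ} p(s) ds`. -/
def Nval (p : ℝ → ℝ) (θ : ℝ) : ℝ :=
  sInf {y : ℝ | ∃ t : ℝ, 0 ≤ t ∧ y = ∫ s in t..(t + θ), p s}


open Topology

/-!
In the coordinate `V(r) = ∫_1^r ds/φ(s)` the flow decreases `V ∘ z` at rate `p`, while an impulse
raises it by at most `M`. On a span of length `Δ` the flow gains at least `(Δ/θ - 1) N`, and by the
uniform frequency bound at most `ρ Δ + K` impulses occur for any fixed `ρ > 1/θ`; choosing `ρ` with
`ρ M < N / θ` gives `V(z(t)) ≤ V(z₀) + C - c (t - t₀ + n)`. This bound pulls `z(t)` below `z₀`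
once `c (t - t₀ + n) > C`; before that only `⌊C / c⌋` impulses have occurred, and iterating the
monotone envelope `Ψ(r) = max(r, sup_{[0,r]} ψ)` that many times bounds `z` uniformly. The KL
function combines the uniform bound with the inverse of `V` applied to the decaying level.
-/

theorem ClassP.nonneg {α : ℝ → ℝ} (hα : ClassP α) {x : ℝ} (hx : 0 ≤ x) : 0 ≤ α x := by
  rcases hx.eq_or_lt with rfl | hx
  · exact hα.2.1.ge
  · exact (hα.2.2 x hx).le

theorem ClassP.one_div_continuousOn {α : ℝ → ℝ} (hα : ClassP α) :
    ContinuousOn (fun s => 1 / α s) (Ioi 0) :=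
  continuousOn_const.div (hα.1.mono Ioi_subset_Ici_self) fun s hs => (hα.2.2 s hs).ne'

theorem ClassP.bddAbove_image_Icc {α : ℝ → ℝ} (hα : ClassP α) (r : ℝ) :
    BddAbove (α '' Icc 0 r) :=
  (isCompact_Icc.image_of_continuousOn (hα.1.mono fun _ hx => hx.1)).bddAbove

theorem ClassP.intervalIntegrable_one_div {α : ℝ → ℝ} (hα : ClassP α) {a b : ℝ} (ha : 0 < a)
    (hb : 0 < b) : IntervalIntegrable (fun s => 1 / α s) volume a b :=
  (hα.one_div_continuousOn.mono fun _ hx => lt_of_lt_of_le (lt_min ha hb) hx.1).intervalIntegrable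

/-- The Lyapunov coordinate `V(r) = ∫_1^r ds/φ(s)`, in which the flow `ż = -p φ(z)` becomes
`V(z)' = -p`. -/
def lyap (φ : ℝ → ℝ) (r : ℝ) : ℝ := ∫ s in (1 : ℝ)..r, 1 / φ s

section Lyapunov

variable {φ : ℝ → ℝ} (hφ : ClassP φ)
include hφ

theorem lyap_sub_lyap {a b : ℝ} (ha : 0 < a) (hb : 0 < b) :
    lyap φ b - lyap φ a = ∫ s in a..b, 1 / φ s :=
  intervalIntegral.integral_interval_sub_left (hφ.intervalIntegrable_one_div one_pos hb)
    (hφ.intervalIntegrable_one_div one_pos ha)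

theorem lyap_strictMonoOn : StrictMonoOn (lyap φ) (Ioi 0) := by
  intro a ha b hb hab
  have : 0 < ∫ s in a..b, 1 / φ s :=
    intervalIntegral.intervalIntegral_pos_of_pos_on (hφ.intervalIntegrable_one_div ha hb)
      (fun x hx => one_div_pos.2 (hφ.2.2 x (lt_trans ha hx.1))) hab
  linarith [lyap_sub_lyap hφ ha hb]

theorem lyap_le_lyap {a b : ℝ} (ha : 0 < a) (hab : a ≤ b) : lyap φ a ≤ lyap φ b :=
  (lyap_strictMonoOn hφ).monotoneOn ha (lt_of_lt_of_le ha hab) hab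

theorem lyap_continuousAt {x : ℝ} (hx : 0 < x) : ContinuousAt (lyap φ) x :=
  (intervalIntegral.integral_hasDerivAt_right (hφ.intervalIntegrable_one_div one_pos hx)
    ⟨_, Ioi_mem_nhds hx, hφ.one_div_continuousOn.aestronglyMeasurable measurableSet_Ioi⟩
    (hφ.one_div_continuousOn.continuousAt (Ioi_mem_nhds hx))).continuousAt

theorem lyap_continuousOn : ContinuousOn (lyap φ) (Ioi 0) :=
  fun _ hx => (lyap_continuousAt hφ hx).continuousWithinAt

end Lyapunov

/-- Generalized inverse of `lyap φ`: it is `0` on levels below the range of `lyap φ` (and has a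
junk value on levels above it). -/
def lyapInv (φ : ℝ → ℝ) (y : ℝ) : ℝ := sSup (insert 0 {x | 0 < x ∧ lyap φ x ≤ y})

section LyapunovInverse

variable {φ : ℝ → ℝ} (hφ : ClassP φ) {c y : ℝ}
include hφ

theorem bddAbove_lyapInv_set (hc : 0 < c) (hy : y ≤ lyap φ c) :
    BddAbove (insert 0 {x | 0 < x ∧ lyap φ x ≤ y}) := by
  refine ⟨c, ?_⟩
  rintro x (rfl | ⟨hx, hxy⟩)
  · exact hc.le
  · exact ((lyap_strictMonoOn hφ).le_iff_le hx hc).1 (hxy.trans hy)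

theorem lyapInv_nonneg (hc : 0 < c) (hy : y ≤ lyap φ c) : 0 ≤ lyapInv φ y :=
  le_csSup (bddAbove_lyapInv_set hφ hc hy) (mem_insert _ _)

theorem le_lyapInv {x : ℝ} (hc : 0 < c) (hy : y ≤ lyap φ c) (hx : 0 < x) (hxy : lyap φ x ≤ y) :
    x ≤ lyapInv φ y :=
  le_csSup (bddAbove_lyapInv_set hφ hc hy) (mem_insert_of_mem _ ⟨hx, hxy⟩)

theorem lyapInv_mono {y' : ℝ} (hc : 0 < c) (hy' : y' ≤ lyap φ c) (hyy' : y ≤ y') :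
    lyapInv φ y ≤ lyapInv φ y' :=
  csSup_le_csSup (bddAbove_lyapInv_set hφ hc hy') (insert_nonempty _ _)
    (insert_subset_insert fun _ hx => ⟨hx.1, hx.2.trans hyy'⟩)

theorem lyap_lt_of_lt_lyapInv {x : ℝ} (hx : 0 < x) (h : x < lyapInv φ y) : lyap φ x < y := by
  obtain ⟨w, hw | ⟨hw, hwy⟩, hxw⟩ := exists_lt_of_lt_csSup (insert_nonempty _ _) h
  · exact absurd (hw ▸ hxw) hx.not_gt
  · exact ((lyap_strictMonoOn hφ) hx hw hxw).trans_le hwy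

theorem lyapInv_lt_of_lt_lyap {x : ℝ} (hx : 0 < x) (h : y < lyap φ x) : lyapInv φ y < x := by
  have hev : ∀ᶠ x' in 𝓝[<] x, (y < lyap φ x' ∧ 0 < x') ∧ x' < x :=
    (((lyap_continuousAt hφ hx).eventually (lt_mem_nhds h)).and
      (lt_mem_nhds hx)).filter_mono nhdsWithin_le_nhds |>.and self_mem_nhdsWithin
  obtain ⟨x', ⟨hyx', hx'⟩, hx'x⟩ := hev.exists
  refine lt_of_le_of_lt (csSup_le (insert_nonempty _ _) ?_) hx'x
  rintro w (rfl | ⟨hw, hwy⟩)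
  · exact hx'.le
  · exact ((lyap_strictMonoOn hφ).lt_iff_lt hw hx').1 (hwy.trans_lt hyx') |>.le

theorem lyapInv_continuousAt (hc : 0 < c) (hy : y < lyap φ c) : ContinuousAt (lyapInv φ) y := by
  have hnonneg : ∀ᶠ y' in 𝓝 y, 0 ≤ lyapInv φ y' :=
    (gt_mem_nhds hy).mono fun y' hy' => lyapInv_nonneg hφ hc hy'.le
  refine tendsto_order.2 ⟨fun a ha => ?_, fun b hb => ?_⟩
  · rcases lt_or_ge a 0 with ha0 | ha0
    · exact hnonneg.mono fun y' hy' => ha0.trans_le hy'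
    obtain ⟨x, hax, hx⟩ := exists_between ha
    have hx0 : 0 < x := ha0.trans_lt hax
    filter_upwards [lt_mem_nhds (lyap_lt_of_lt_lyapInv hφ hx0 hx), gt_mem_nhds hy] with y' h1 h2
    exact hax.trans_le (le_lyapInv hφ hc h2.le hx0 h1.le)
  · have hb0 : 0 < b := (lyapInv_nonneg hφ hc hy.le).trans_lt hb
    have : y < lyap φ b := by
      by_contra! h
      exact hb.not_ge (le_lyapInv hφ hc hy.le hb0 h)
    filter_upwards [gt_mem_nhds this] with y' hy' using lyapInv_lt_of_lt_lyap hφ hb0 hy'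

theorem tendsto_lyapInv_atBot : Tendsto (lyapInv φ) atBot (𝓝 0) := by
  refine tendsto_order.2 ⟨fun a ha => ?_, fun b hb => ?_⟩
  · filter_upwards [eventually_le_atBot (lyap φ 1)] with y hy
    exact ha.trans_le (lyapInv_nonneg hφ one_pos hy)
  · filter_upwards [eventually_lt_atBot (lyap φ b)] with y hy
    exact lyapInv_lt_of_lt_lyap hφ hb hy

end LyapunovInverse

def envelope (ψ : ℝ → ℝ) (r : ℝ) : ℝ := max r (sSup (ψ '' Icc 0 r))

section Envelope

variable {ψ : ℝ → ℝ} (hψ : ClassP ψ)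

theorem le_envelope (r : ℝ) : r ≤ envelope ψ r := le_max_left _ _

include hψ

theorem apply_le_envelope {a r : ℝ} (ha : 0 ≤ a) (har : a ≤ r) : ψ a ≤ envelope ψ r :=
  (le_csSup (hψ.bddAbove_image_Icc r) (mem_image_of_mem ψ ⟨ha, har⟩)).trans (le_max_right _ _)

theorem envelope_zero : envelope ψ 0 = 0 := by
  simp [envelope, hψ.2.1]

theorem envelope_monotone : Monotone (envelope ψ) := by
  intro r r' hrr'
  refine max_le_max hrr' ?_
  rcases (Icc 0 r).eq_empty_or_nonempty with h | h
  · rw [h, image_empty, Real.sSup_empty]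
    exact Real.sSup_nonneg (forall_mem_image.2 fun x hx => hψ.nonneg hx.1)
  · exact csSup_le_csSup (hψ.bddAbove_image_Icc r') (h.image ψ)
      (image_mono (Icc_subset_Icc_right hrr'))

/-- Rescaling `[0, r]` to `[0, 1]` makes the supremum a continuous function of `r`. -/
theorem envelope_continuousOn : ContinuousOn (envelope ψ) (Ici 0) := by
  have hψ' : Continuous fun x => ψ (max x 0) :=
    hψ.1.comp_continuous (continuous_id.max continuous_const) fun x => le_max_right x 0
  have hsup : Continuous fun r => sSup ((fun s => ψ (max (s * r) 0)) '' Icc 0 1) :=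
    isCompact_Icc.continuous_sSup (hψ'.comp (continuous_snd.mul continuous_fst))
  refine (continuous_id.max hsup).continuousOn.congr fun r (hr : 0 ≤ r) => ?_
  have : ψ '' Icc 0 r = (fun s => ψ (max (s * r) 0)) '' Icc 0 1 := by
    have hI : (fun s => s * r) '' Icc 0 1 = Icc 0 r := by
      simpa using image_mul_right_Icc zero_le_one hr
    rw [← hI, image_image]
    refine image_congr fun s hs => ?_
    rw [max_eq_left (mul_nonneg hs.1 hr)]
  simp only [envelope, this, id]

theorem envelope_iterate_continuousOn (n : ℕ) : ContinuousOn (envelope ψ)^[n] (Ici 0) :=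
  (envelope_continuousOn hψ).iterate (fun r (hr : 0 ≤ r) => hr.trans (le_envelope r)) n

end Envelope

theorem antitoneOn_Icc_of_small_steps {g : ℝ → ℝ} {a b δ : ℝ} (hδ : 0 < δ)
    (h : ∀ x ∈ Icc a b, ∀ y ∈ Icc a b, x ≤ y → y ≤ x + δ → g y ≤ g x) :
    AntitoneOn g (Icc a b) := by
  intro x hx y hy hxy
  obtain ⟨n, hn⟩ := exists_nat_ge ((y - x) / δ)
  rw [div_le_iff₀ hδ] at hn
  induction n generalizing y with
  | zero => simp only [CharP.cast_eq_zero, zero_mul] at hn; rw [le_antisymm (by linarith) hxy]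
  | succ n ih =>
    rcases le_or_gt y (x + δ) with hyδ | hyδ
    · exact h x hx y hy hxy hyδ
    have hy' : y - δ ∈ Icc a b := ⟨by linarith [hx.1], by linarith [hy.2]⟩
    refine (h _ hy' y hy (by linarith) (by linarith)).trans (ih hy' (by linarith) ?_)
    push_cast at hn
    linarith

section Flow

variable {φ p z : ℝ → ℝ} (hφ : ClassP φ)
include hφ

theorem lyap_sub_le_mul_integral {s s' lo hi : ℝ} (hss' : s ≤ s') (hlo : 0 < lo)
    (hp : ∀ x, 0 ≤ p x) (hpi : IntervalIntegrable p volume s s')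
    (hz : ContinuousOn z (Icc s s')) (hzs' : 0 < z s')
    (hbounds : ∀ σ ∈ Icc s s', lo ≤ φ (z σ) ∧ φ (z σ) ≤ hi)
    (hflowi : IntervalIntegrable (fun x => p x * φ (z x)) volume s s')
    (hflow : z s' - z s ≤ -∫ x in s..s', p x * φ (z x)) :
    lyap φ (z s') - lyap φ (z s) ≤ -(lo / hi) * ∫ x in s..s', p x := by
  obtain ⟨hlo_s, hs_hi⟩ := hbounds s ⟨le_rfl, hss'⟩
  have hhi : 0 < hi := hlo.trans_le (hlo_s.trans hs_hi)
  have hdrop : lo * ∫ x in s..s', p x ≤ z s - z s' := by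
    rw [← intervalIntegral.integral_const_mul]
    refine (intervalIntegral.integral_mono_on hss' (hpi.const_mul lo) hflowi
      fun x hx => ?_).trans (by linarith)
    rw [mul_comm]
    exact mul_le_mul_of_nonneg_left (hbounds x hx).1 (hp x)
  have hP : 0 ≤ ∫ x in s..s', p x := intervalIntegral.integral_nonneg hss' fun x _ => hp x
  have hzz : z s' ≤ z s := by nlinarith
  have hzs : 0 < z s := hzs'.trans_le hzz
  -- every level between `z s'` and `z s` is attained on `[s, s']`, where `φ ∘ z ≤ hi`
  have hV : (z s - z s') * (1 / hi) ≤ lyap φ (z s) - lyap φ (z s') := by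
    rw [lyap_sub_lyap hφ hzs' hzs, ← smul_eq_mul, ← intervalIntegral.integral_const]
    refine intervalIntegral.integral_mono_on hzz intervalIntegrable_const
      (hφ.intervalIntegrable_one_div hzs' hzs) fun w hw => ?_
    obtain ⟨σ, hσ, rfl⟩ := intermediate_value_Icc' hss' hz hw
    exact one_div_le_one_div_of_le (hφ.2.2 _ (hzs'.trans_le hw.1)) (hbounds σ hσ).2
  have : lo / hi * ∫ x in s..s', p x ≤ (z s - z s') * (1 / hi) := by
    rw [div_mul_eq_mul_div, mul_one_div]
    exact div_le_div_of_nonneg_right hdrop hhi.le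
  linarith

theorem lyap_add_mul_integral_le {a b η : ℝ} (hη : η ∈ Ioo (0 : ℝ) 1) (hab : a ≤ b)
    (hp : ∀ x, 0 ≤ p x) (hpi : IntervalIntegrable p volume a b) (hz : ContinuousOn z (Icc a b))
    (hzpos : ∀ s ∈ Icc a b, 0 < z s)
    (hflow : ∀ s ∈ Icc a b, ∀ s' ∈ Icc a b, s ≤ s' →
      IntervalIntegrable (fun x => p x * φ (z x)) volume s s' ∧
        z s' - z s ≤ -∫ x in s..s', p x * φ (z x)) :
    lyap φ (z b) + (1 - η) * ∫ x in a..b, p x ≤ lyap φ (z a) := by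
  have hφz : ContinuousOn (fun s => φ (z s)) (Icc a b) :=
    hφ.1.comp hz fun s hs => (hzpos s hs).le
  obtain ⟨s₀, hs₀, hmin⟩ := isCompact_Icc.exists_isMinOn (nonempty_Icc.2 hab) hφz
  set m := φ (z s₀)
  have hm : 0 < m := hφ.2.2 _ (hzpos s₀ hs₀)
  have hpi' : ∀ s ∈ Icc a b, ∀ s' ∈ Icc a b, IntervalIntegrable p volume s s' :=
    fun s hs s' hs' => hpi.mono_set (uIcc_subset_uIcc (by simpa [uIcc_of_le hab] using hs)
      (by simpa [uIcc_of_le hab] using hs'))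
  -- on short steps `φ ∘ z` is nearly constant, so `V ∘ z` drops by at least `(1 - η) ∫ p`
  obtain ⟨δ, hδ, hclose⟩ := Metric.uniformContinuousOn_iff.1
    (isCompact_Icc.uniformContinuousOn_of_continuous hφz) (η * m / 2) (by nlinarith [hη.1])
  have hanti : AntitoneOn (fun s => lyap φ (z s) + (1 - η) * ∫ x in a..s, p x) (Icc a b) := by
    refine antitoneOn_Icc_of_small_steps (half_pos hδ) fun s hs s' hs' hss' hs'δ => ?_
    have hsub : Icc s s' ⊆ Icc a b := Icc_subset_Icc hs.1 hs'.2
    set v := φ (z s)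
    have hv : m ≤ v := hmin hs
    have hbounds : ∀ σ ∈ Icc s s', v - η * m / 2 ≤ φ (z σ) ∧ φ (z σ) ≤ v + η * m / 2 := by
      intro σ hσ
      have := hclose σ (hsub hσ) s hs (by
        rw [Real.dist_eq, abs_of_nonneg (by linarith [hσ.1])]; linarith [hσ.2])
      rw [Real.dist_eq, abs_lt] at this
      constructor <;> linarith
    have hstep := lyap_sub_le_mul_integral hφ hss' (by nlinarith [hη.2]) hp (hpi' s hs s' hs')
      (hz.mono hsub) (hzpos s' hs') hbounds (hflow s hs s' hs' hss').1
      (hflow s hs s' hs' hss').2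
    have hratio : 1 - η ≤ (v - η * m / 2) / (v + η * m / 2) := by
      rw [le_div_iff₀ (by nlinarith [hη.1])]
      nlinarith [mul_le_mul_of_nonneg_left hv hη.1.le, mul_pos (mul_pos hη.1 hη.1) hm]
    have hP : 0 ≤ ∫ x in s..s', p x := intervalIntegral.integral_nonneg hss' fun x _ => hp x
    rw [← intervalIntegral.integral_add_adjacent_intervals (hpi' a ⟨le_rfl, hab⟩ s hs)
      (hpi' s hs s' hs')]
    nlinarith [mul_le_mul_of_nonneg_right hratio hP]
  simpa using hanti ⟨le_rfl, hab⟩ ⟨hab, le_rfl⟩ hab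

theorem lyap_le_sub_integral {a b : ℝ} (hab : a ≤ b) (hp : ∀ x, 0 ≤ p x)
    (hpi : IntervalIntegrable p volume a b) (hz : ContinuousOn z (Icc a b))
    (hzpos : ∀ s ∈ Icc a b, 0 < z s)
    (hflow : ∀ s ∈ Icc a b, ∀ s' ∈ Icc a b, s ≤ s' →
      IntervalIntegrable (fun x => p x * φ (z x)) volume s s' ∧
        z s' - z s ≤ -∫ x in s..s', p x * φ (z x)) :
    lyap φ (z b) ≤ lyap φ (z a) - ∫ x in a..b, p x := by
  have hlim : Tendsto (fun η => lyap φ (z a) - (1 - η) * ∫ x in a..b, p x) (𝓝[>] 0)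
      (𝓝 (lyap φ (z a) - ∫ x in a..b, p x)) :=
    tendsto_nhdsWithin_of_tendsto_nhds ((by fun_prop : Continuous fun η : ℝ =>
      lyap φ (z a) - (1 - η) * ∫ x in a..b, p x).tendsto' 0 _ (by simp))
  exact ge_of_tendsto hlim (eventually_of_mem (Ioo_mem_nhdsGT one_pos) fun η hη => by
    linarith [lyap_add_mul_integral_le hφ hη hab hp hpi hz hzpos hflow])

end Flow

section ImpulseCount

variable {γ : Set ℝ} (hγ : IsImpulseSeq γ)
include hγ

theorem IsImpulseSeq.finite_inter_Ioc (a b : ℝ) : (γ ∩ Ioc a b).Finite :=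
  (hγ.2 b).subset (inter_subset_inter_right γ Ioc_subset_Iic_self)

theorem impCnt_add {a b c : ℝ} (hab : a ≤ b) (hbc : b ≤ c) :
    impCnt γ a c = impCnt γ a b + impCnt γ b c := by
  rw [impCnt, impCnt, impCnt, ← Ioc_union_Ioc_eq_Ioc hab hbc, inter_union_distrib_left,
    ncard_union_eq ((Ioc_disjoint_Ioc_of_le le_rfl).mono inter_subset_right inter_subset_right)
      (hγ.finite_inter_Ioc a b) (hγ.finite_inter_Ioc b c)]

theorem impCnt_mono_right {a b c : ℝ} (hab : a ≤ b) (hbc : b ≤ c) :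
    impCnt γ a b ≤ impCnt γ a c :=
  (impCnt_add hγ hab hbc).symm ▸ Nat.le_add_right _ _

theorem eventually_impCnt_add_one {a τ : ℝ} (hτ : τ ∈ γ) (haτ : a < τ) :
    ∀ᶠ s in 𝓝[<] τ, impCnt γ a s + 1 = impCnt γ a τ := by
  obtain ⟨s₀, hs₀τ, has₀, hgap⟩ : ∃ s₀ < τ, a ≤ s₀ ∧ ∀ x ∈ γ, s₀ < x → τ ≤ x := by
    have hfin : (γ ∩ Ioo a τ).Finite :=
      (hγ.2 τ).subset (inter_subset_inter_right γ fun _ hx => hx.2.le)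
    rcases (γ ∩ Ioo a τ).eq_empty_or_nonempty with hF | hF
    · refine ⟨a, haτ, le_rfl, fun x hx hax => not_lt.1 fun hxτ => ?_⟩
      exact (eq_empty_iff_forall_notMem.1 hF) x ⟨hx, hax, hxτ⟩
    · obtain ⟨s₀, hs₀, hmax⟩ := exists_max_image _ id hfin hF
      refine ⟨s₀, hs₀.2.2, hs₀.2.1.le, fun x hx hs₀x => not_lt.1 fun hxτ => ?_⟩
      exact (hmax x ⟨hx, hs₀.2.1.trans hs₀x, hxτ⟩).not_gt hs₀x
  filter_upwards [Ioo_mem_nhdsLT hs₀τ] with s hs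
  have hone : γ ∩ Ioc s τ = {τ} :=
    eq_singleton_iff_unique_mem.2 ⟨⟨hτ, hs.2, le_rfl⟩,
      fun x hx => le_antisymm hx.2.2 (hgap x hx.1 (hs.1.trans hx.2.1))⟩
  rw [impCnt_add hγ (has₀.trans hs.1.le) hs.2.le, impCnt.eq_def γ s τ, hone, ncard_singleton]

theorem impCnt_induction {a : ℝ} {P : ℕ → ℝ → Prop}
    (zero : ∀ t, a ≤ t → γ ∩ Ioc a t = ∅ → P 0 t)
    (succ : ∀ n τ t, τ ∈ γ → a < τ → τ ≤ t → γ ∩ Ioc τ t = ∅ →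
      (∀ᶠ s in 𝓝[<] τ, P n s) → P (n + 1) t) :
    ∀ t, a ≤ t → P (impCnt γ a t) t := by
  intro t hat
  generalize hn : impCnt γ a t = n
  induction n generalizing t with
  | zero => exact zero t hat ((ncard_eq_zero (hγ.finite_inter_Ioc a t)).1 hn)
  | succ n ih =>
    have hne : (γ ∩ Ioc a t).Nonempty :=
      (ncard_pos (hγ.finite_inter_Ioc a t)).1 (by rw [← impCnt, hn]; omega)
    obtain ⟨τ, hτ, hlast⟩ := exists_max_image _ id (hγ.finite_inter_Ioc a t) hne
    have hfree : γ ∩ Ioc τ t = ∅ := eq_empty_iff_forall_notMem.2 fun x hx =>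
      (hlast x ⟨hx.1, hτ.2.1.trans hx.2.1, hx.2.2⟩).not_gt hx.2.1
    have hτt : impCnt γ a τ = n + 1 := by
      rw [← hn, impCnt_add hγ hτ.2.1.le hτ.2.2, impCnt.eq_def γ τ t, hfree, ncard_empty, add_zero]
    refine succ n τ t hτ.1 hτ.2.1 hτ.2.2 hfree ?_
    filter_upwards [eventually_impCnt_add_one hγ hτ.1 hτ.2.1, Ioo_mem_nhdsLT hτ.2.1]
      with s hs has
    exact ih s has.1.le (by omega)

end ImpulseCount

theorem LocIntNN.intervalIntegrable {p : ℝ → ℝ} (hp : LocIntNN p) {a b : ℝ} (ha : 0 ≤ a)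
    (hb : 0 ≤ b) : IntervalIntegrable p volume a b := by
  rcases le_total a b with hab | hba
  · exact hp.2 a b ha hab
  · exact (hp.2 b a hb hba).symm

theorem LocIntNN.continuousAt_primitive {p : ℝ → ℝ} (hp : LocIntNN p) {a x : ℝ} (ha : 0 ≤ a)
    (hax : a < x) : ContinuousAt (fun s => ∫ y in a..s, p y) x := by
  have hx1 : a ≤ x + 1 := by linarith
  refine (intervalIntegral.continuousOn_primitive_interval'
    (hp.intervalIntegrable ha (ha.trans hx1)) left_mem_uIcc).continuousAt ?_
  rw [uIcc_of_le hx1]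
  exact Icc_mem_nhds hax (lt_add_one x)

theorem EReal.coe_lt_of_le_of_lt {x t : ℝ} {T : EReal} (hxt : x ≤ t) (ht : (t : EReal) < T) :
    (x : EReal) < T :=
  (EReal.coe_le_coe_iff.2 hxt).trans_lt ht

theorem lyap_apply_le_add_Mval {φ ψ : ℝ → ℝ} (hφ : ClassP φ) (hψ : ClassP ψ)
    (hM : 0 < Mval φ ψ) {a : ℝ} (ha : 0 < a) : lyap φ (ψ a) ≤ lyap φ a + Mval φ ψ := by
  -- an unbounded set of reals has `sSup = 0`, so `0 < M` forces boundedness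
  have hbdd : BddAbove {y : ℝ | ∃ a : ℝ, 0 < a ∧ y = ∫ s in a..(ψ a), 1 / φ s} := by
    by_contra h
    rw [Mval, Real.sSup_of_not_bddAbove h] at hM
    exact hM.false
  have : ∫ s in a..(ψ a), 1 / φ s ≤ Mval φ ψ := le_csSup hbdd ⟨a, ha, rfl⟩
  linarith [lyap_sub_lyap hφ ha (hψ.2.2 a ha)]

section Solution

variable {p φ ψ : ℝ → ℝ} {γ : Set ℝ} {t0 z0 : ℝ} {T : EReal} {z : ℝ → ℝ}
  (hsol : IsCompSol p φ ψ γ t0 T z0 z) (hφ : ClassP φ) (hp : LocIntNN p) (ht0 : 0 ≤ t0)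
include hsol hφ hp ht0

theorem IsCompSol.flow {a b : ℝ} (ha : t0 ≤ a) (hab : a ≤ b) (hb : (b : EReal) < T)
    (hfree : γ ∩ Ioc a b = ∅) :
    z b ≤ z a ∧ (0 < z b → lyap φ (z b) ≤ lyap φ (z a) - ∫ x in a..b, p x) := by
  have hsub : ∀ s ∈ Icc a b, ∀ s' ∈ Icc a b, s ≤ s' →
      IntervalIntegrable (fun x => p x * φ (z x)) volume s s' ∧
        z s' - z s ≤ -∫ x in s..s', p x * φ (z x) := fun s hs s' hs' hss' =>
    hsol.flow_int s s' (ha.trans hs.1) hss' (EReal.coe_lt_of_le_of_lt hs'.2 hb)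
      (eq_empty_of_subset_empty (hfree ▸ inter_subset_inter_right γ (Ioc_subset_Ioc hs.1 hs'.2)))
  have hanti : ∀ s ∈ Icc a b, ∀ s' ∈ Icc a b, s ≤ s' → z s' ≤ z s := by
    intro s hs s' hs' hss'
    have : 0 ≤ ∫ x in s..s', p x * φ (z x) := intervalIntegral.integral_nonneg hss' fun x hx =>
      mul_nonneg (hp.1 x) (hφ.nonneg (hsol.nonneg x (ha.trans (hs.1.trans hx.1))
        (EReal.coe_lt_of_le_of_lt (hx.2.trans hs'.2) hb)))
    linarith [(hsub s hs s' hs' hss').2]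
  refine ⟨hanti a ⟨le_rfl, hab⟩ b ⟨hab, le_rfl⟩ hab, fun hzb => ?_⟩
  exact lyap_le_sub_integral hφ hab hp.1 (hp.intervalIntegrable (ht0.trans ha)
    (ht0.trans (ha.trans hab))) (hsol.flow_cont a b ha hab hb hfree)
    (fun s hs => hzb.trans_le (hanti s hs b ⟨hab, le_rfl⟩ hs.2)) hsub

theorem IsCompSol.le_envelope_iterate (hψ : ClassP ψ) (hγ : IsImpulseSeq γ) :
    ∀ t, t0 ≤ t → (t : EReal) < T → z t ≤ (envelope ψ)^[impCnt γ t0 t] z0 := by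
  refine impCnt_induction hγ (P := fun n t => (t : EReal) < T → z t ≤ (envelope ψ)^[n] z0)
    (fun t ht hfree htT => by simpa [hsol.init] using (hsol.flow hφ hp ht0 le_rfl ht htT hfree).1)
    fun n τ t hτ ht0τ hτt hfree ih htT => ?_
  have hτT := EReal.coe_lt_of_le_of_lt hτt htT
  obtain ⟨L, hL, hjump⟩ := hsol.jump τ hτ ht0τ hτT
  have hbefore : ∀ᶠ s in 𝓝[<] τ, 0 ≤ z s ∧ z s ≤ (envelope ψ)^[n] z0 := by
    filter_upwards [ih, Ioo_mem_nhdsLT ht0τ] with s hs hs'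
    have hsT := EReal.coe_lt_of_le_of_lt hs'.2.le hτT
    exact ⟨hsol.nonneg s hs'.1.le hsT, hs hsT⟩
  calc z t ≤ z τ := (hsol.flow hφ hp ht0 ht0τ.le hτt htT hfree).1
    _ ≤ ψ L := hjump
    _ ≤ envelope ψ ((envelope ψ)^[n] z0) :=
      apply_le_envelope hψ (ge_of_tendsto hL (hbefore.mono fun s hs => hs.1))
        (le_of_tendsto hL (hbefore.mono fun s hs => hs.2))
    _ = (envelope ψ)^[n + 1] z0 := (Function.iterate_succ_apply' _ _ _).symm

theorem IsCompSol.lyap_le (hψ : ClassP ψ) (hγ : IsImpulseSeq γ) {M : ℝ}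
    (hjumpM : ∀ a, 0 < a → lyap φ (ψ a) ≤ lyap φ a + M) :
    ∀ t, t0 ≤ t → (t : EReal) < T → 0 < z t →
      lyap φ (z t) ≤ lyap φ z0 + impCnt γ t0 t * M - ∫ x in t0..t, p x := by
  refine impCnt_induction hγ (P := fun n t => (t : EReal) < T → 0 < z t →
      lyap φ (z t) ≤ lyap φ z0 + n * M - ∫ x in t0..t, p x)
    (fun t ht hfree htT hzt => by
      simpa [hsol.init] using (hsol.flow hφ hp ht0 le_rfl ht htT hfree).2 hzt)
    fun n τ t hτ ht0τ hτt hfree ih htT hzt => ?_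
  have hτT := EReal.coe_lt_of_le_of_lt hτt htT
  obtain ⟨L, hL, hjump⟩ := hsol.jump τ hτ ht0τ hτT
  have hseg := hsol.flow hφ hp ht0 ht0τ.le hτt htT hfree
  have hzτ : 0 < z τ := hzt.trans_le hseg.1
  have hL0 : 0 ≤ L := ge_of_tendsto hL <| eventually_of_mem (Ioo_mem_nhdsLT ht0τ) fun s hs =>
    hsol.nonneg s hs.1.le (EReal.coe_lt_of_le_of_lt hs.2.le hτT)
  have hLpos : 0 < L := hL0.lt_of_ne <| by
    rintro rfl
    rw [hψ.2.1] at hjump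
    exact hjump.not_gt hzτ
  have hbefore : ∀ᶠ s in 𝓝[<] τ, lyap φ (z s) ≤ lyap φ z0 + n * M - ∫ x in t0..s, p x := by
    filter_upwards [ih, hL.eventually (lt_mem_nhds hLpos), self_mem_nhdsWithin] with s hs hzs hsτ
    exact hs (EReal.coe_lt_of_le_of_lt (le_of_lt hsτ) hτT) hzs
  have hVL : lyap φ L ≤ lyap φ z0 + n * M - ∫ x in t0..τ, p x :=
    le_of_tendsto_of_tendsto ((lyap_continuousAt hφ hLpos).tendsto.comp hL)
      (tendsto_const_nhds.sub
        ((hp.continuousAt_primitive ht0 ht0τ).tendsto.mono_left nhdsWithin_le_nhds)) hbefore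
  have hVτ : lyap φ (z τ) ≤ lyap φ L + M :=
    (lyap_le_lyap hφ hzτ hjump).trans (hjumpM L hLpos)
  have hsplit := intervalIntegral.integral_add_adjacent_intervals
    (hp.intervalIntegrable ht0 (ht0.trans ht0τ.le))
    (hp.intervalIntegrable (ht0.trans ht0τ.le) (ht0.trans (ht0τ.le.trans hτt)))
  push_cast
  linarith [hseg.2 hzt]

end Solution

theorem Nval_le_integral {p : ℝ → ℝ} (hp : LocIntNN p) {θ s : ℝ} (hθ : 0 ≤ θ) (hs : 0 ≤ s) :
    Nval p θ ≤ ∫ x in s..s + θ, p x :=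
  csInf_le ⟨0, by
    rintro y ⟨t, -, rfl⟩
    exact intervalIntegral.integral_nonneg (by linarith) fun x _ => hp.1 x⟩ ⟨s, hs, rfl⟩

theorem le_integral_of_le_window_integral {p : ℝ → ℝ} (hp : LocIntNN p) {θ N : ℝ} (hθ : 0 < θ)
    (hN0 : 0 ≤ N) (hN : ∀ s, 0 ≤ s → N ≤ ∫ x in s..s + θ, p x) {a t : ℝ} (ha : 0 ≤ a)
    (hat : a ≤ t) : ((t - a) / θ - 1) * N ≤ ∫ x in a..t, p x := by
  have hwindows : ∀ k : ℕ, k * N ≤ ∫ x in a..a + k * θ, p x := by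
    intro k
    induction k with
    | zero => simp
    | succ k ih =>
      have hk : 0 ≤ a + k * θ := by positivity
      rw [Nat.cast_succ, add_one_mul, add_one_mul, ← add_assoc,
        ← intervalIntegral.integral_add_adjacent_intervals (hp.intervalIntegrable ha hk)
          (hp.intervalIntegrable hk (by positivity))]
      linarith [hN _ hk]
  set k := ⌊(t - a) / θ⌋₊
  have hkt : a + k * θ ≤ t := by
    have := Nat.floor_le (div_nonneg (sub_nonneg.2 hat) hθ.le)
    rw [le_div_iff₀ hθ] at this
    linarith
  calc ((t - a) / θ - 1) * N ≤ k * N :=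
        mul_le_mul_of_nonneg_right (Nat.sub_one_lt_floor _).le hN0
    _ ≤ ∫ x in a..a + k * θ, p x := hwindows k
    _ ≤ ∫ x in a..t, p x :=
        intervalIntegral.integral_mono_interval le_rfl (le_add_of_nonneg_right (by positivity)) hkt
          (ae_of_all _ hp.1) (hp.intervalIntegrable ha (ha.trans hat))

theorem USubSup.exists_impCnt_le {ρ ρ' : ℝ} {S : Set (Set ℝ)} (hS : USubSup ρ S)
    (hρρ' : ρ < ρ') (hρ' : 0 ≤ ρ') :
    ∃ K, ∀ γ ∈ S, ∀ s t, 0 ≤ s → s ≤ t → (impCnt γ s t : ℝ) ≤ ρ' * (t - s) + K := by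
  obtain ⟨T₀, hT₀, hT⟩ := hS.2 (ρ' - ρ) (sub_pos.2 hρρ')
  refine ⟨ρ' * T₀, fun γ hγ s t hs hst => ?_⟩
  have hwindow : ∀ t', T₀ ≤ t' → (impCnt γ s (s + t') : ℝ) ≤ ρ' * t' := fun t' ht' => by
    have := hT γ hγ t' ht' s hs
    rw [add_sub_cancel, div_le_iff₀ (hT₀.trans_le ht')] at this
    linarith
  have hK : 0 ≤ ρ' * T₀ := mul_nonneg hρ' hT₀.le
  rcases le_total T₀ (t - s) with h | h
  · have := hwindow (t - s) h
    rw [add_sub_cancel] at this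
    linarith
  · calc (impCnt γ s t : ℝ) ≤ impCnt γ s (s + T₀) :=
          Nat.cast_le.2 (impCnt_mono_right (hS.1 γ hγ) hst (by linarith))
      _ ≤ ρ' * (t - s) + ρ' * T₀ := by
          linarith [hwindow T₀ le_rfl, mul_nonneg hρ' (sub_nonneg.2 hst)]

theorem exists_decay_constants {M N θ ρ K : ℝ} (hM : 0 ≤ M) (hρ : 0 ≤ ρ) (h : ρ * M < N / θ) :
    ∃ C c, 0 < c ∧ ∀ n Δ : ℝ, n ≤ ρ * Δ + K → n * M - (Δ / θ - 1) * N ≤ C - c * (Δ + n) := by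
  set c := (N / θ - ρ * M) / (1 + ρ)
  have hc : 0 < c := div_pos (sub_pos.2 h) (by linarith)
  have hcρ : c * (1 + ρ) = N / θ - ρ * M := div_mul_cancel₀ _ (by linarith)
  refine ⟨K * (M + c) + N, c, hc, fun n Δ hn => ?_⟩
  have := mul_le_mul_of_nonneg_right hn (by linarith : 0 ≤ M + c)
  linear_combination this + Δ * hcρ

theorem USubSup.exists_linear_decay {θ M N : ℝ} {S : Set (Set ℝ)} (hS : USubSup (1 / θ) S)
    (hθ : 0 < θ) (hM : 0 < M) (hMN : M < N) :
    ∃ C c, 0 < c ∧ ∀ γ ∈ S, ∀ s t, 0 ≤ s → s ≤ t →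
      impCnt γ s t * M - ((t - s) / θ - 1) * N ≤ C - c * (t - s + impCnt γ s t) := by
  obtain ⟨ρ, hθρ, hρN⟩ := exists_between (show 1 / θ < N / θ / M by
    rw [lt_div_iff₀ hM, one_div_mul_eq_div]
    exact div_lt_div_of_pos_right hMN hθ)
  have hρ : 0 ≤ ρ := (one_div_pos.2 hθ).le.trans hθρ.le
  obtain ⟨K, hcount⟩ := hS.exists_impCnt_le hθρ hρ
  obtain ⟨C, c, hc, hdecay⟩ := exists_decay_constants (K := K) hM.le hρ ((lt_div_iff₀ hM).1 hρN)
  exact ⟨C, c, hc, fun γ hγ s t hs hst => hdecay _ _ (hcount γ hγ s t hs hst)⟩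

/-- The cap at `V(1 + B r)` keeps the level in the range of `V`, where `lyapInv` inverts `V`. -/
def decayLevel (φ B : ℝ → ℝ) (C c r u : ℝ) : ℝ := lyap φ (1 + B r) - max (c * u - C) 0

/-- `B` bounds solutions uniformly, the `lyapInv` term makes the bound decay, and `r e^{-u}` makes
it strictly monotone in both variables. -/
def klBound (φ B : ℝ → ℝ) (C c r u : ℝ) : ℝ :=
  min (B r) (lyapInv φ (decayLevel φ B C c r u)) + r * Real.exp (-u)

theorem decayLevel_le {φ B : ℝ → ℝ} {C c : ℝ} (r u : ℝ) :
    decayLevel φ B C c r u ≤ lyap φ (1 + B r) :=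
  sub_le_self _ (le_max_right _ _)

section KLBound

variable {φ B : ℝ → ℝ} {C c : ℝ} (hBm : Monotone B) (hB0 : B 0 = 0)
include hBm hB0

theorem one_add_pos_of_monotone {r : ℝ} (hr : 0 ≤ r) : 0 < 1 + B r := by
  linarith [hB0 ▸ hBm hr]

variable (hφ : ClassP φ)
include hφ

theorem lyapInv_decayLevel_nonneg {r : ℝ} (hr : 0 ≤ r) (u : ℝ) :
    0 ≤ lyapInv φ (decayLevel φ B C c r u) :=
  lyapInv_nonneg hφ (one_add_pos_of_monotone hBm hB0 hr) (decayLevel_le r u)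

theorem lyapInv_decayLevel_mono {r r' : ℝ} (hr : 0 ≤ r) (hrr' : r ≤ r') (u : ℝ) :
    lyapInv φ (decayLevel φ B C c r u) ≤ lyapInv φ (decayLevel φ B C c r' u) :=
  lyapInv_mono hφ (one_add_pos_of_monotone hBm hB0 (hr.trans hrr'))
    (decayLevel_le r' u) (sub_le_sub_right (lyap_le_lyap hφ
      (one_add_pos_of_monotone hBm hB0 hr) (by linarith [hBm hrr'])) _)

theorem lyapInv_decayLevel_anti (hc : 0 ≤ c) {r u u' : ℝ} (hr : 0 ≤ r) (huu' : u ≤ u') :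
    lyapInv φ (decayLevel φ B C c r u') ≤ lyapInv φ (decayLevel φ B C c r u) :=
  lyapInv_mono hφ (one_add_pos_of_monotone hBm hB0 hr) (decayLevel_le r u)
    (sub_le_sub_left (max_le_max_right _ (by nlinarith)) _)

theorem klBound_zero (u : ℝ) : klBound φ B C c 0 u = 0 := by
  rw [klBound, hB0, min_eq_left (lyapInv_decayLevel_nonneg hBm hB0 hφ le_rfl u)]
  simp

theorem klBound_continuousOn (hBc : ContinuousOn B (Ici 0)) :
    ContinuousOn (fun q : ℝ × ℝ => klBound φ B C c q.1 q.2) (Ici 0 ×ˢ Ici 0) := by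
  have hB1 : ∀ q ∈ Ici (0 : ℝ) ×ˢ Ici (0 : ℝ), 0 < 1 + B q.1 :=
    fun q hq => one_add_pos_of_monotone hBm hB0 hq.1
  have hB : ContinuousOn (fun q : ℝ × ℝ => B q.1) (Ici 0 ×ˢ Ici 0) :=
    hBc.comp continuousOn_fst fun q hq => hq.1
  have hlevel : ContinuousOn (fun q : ℝ × ℝ => decayLevel φ B C c q.1 q.2) (Ici 0 ×ˢ Ici 0) :=
    ((lyap_continuousOn hφ).comp (continuousOn_const.add hB) hB1).sub
      (by fun_prop : Continuous fun q : ℝ × ℝ => max (c * q.2 - C) 0).continuousOn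
  have hinv : ContinuousOn (fun q : ℝ × ℝ => lyapInv φ (decayLevel φ B C c q.1 q.2))
      (Ici 0 ×ˢ Ici 0) := fun q hq =>
    ContinuousAt.comp_continuousWithinAt (f := fun q : ℝ × ℝ => decayLevel φ B C c q.1 q.2)
      (lyapInv_continuousAt hφ (by linarith [hB1 q hq] : 0 < 2 + B q.1)
        ((decayLevel_le q.1 q.2).trans_lt (lyap_strictMonoOn hφ (hB1 q hq)
          (by simp only [mem_Ioi]; linarith [hB1 q hq]) (by linarith)))) (hlevel q hq)
  exact (hB.inf hinv).add
    (by fun_prop : Continuous fun q : ℝ × ℝ => q.1 * Real.exp (-q.2)).continuousOn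

theorem tendsto_klBound_atTop (hc : 0 < c) {r : ℝ} (hr : 0 ≤ r) :
    Tendsto (fun u => klBound φ B C c r u) atTop (𝓝 0) := by
  have hlevel : Tendsto (decayLevel φ B C c r) atTop atBot := by
    refine tendsto_atBot_mono (fun u => sub_le_sub_left (le_max_left _ _) _) ?_
    simpa [sub_eq_add_neg, add_assoc] using tendsto_atBot_add_const_left atTop
      (lyap φ (1 + B r) + C) (tendsto_neg_atTop_atBot.comp (tendsto_id.const_mul_atTop hc))
  have hmin : Tendsto (fun u => min (B r) (lyapInv φ (decayLevel φ B C c r u))) atTop (𝓝 0) :=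
    squeeze_zero (fun u => le_min (hB0 ▸ hBm hr) (lyapInv_decayLevel_nonneg hBm hB0 hφ hr u))
      (fun u => min_le_right _ _) ((tendsto_lyapInv_atBot hφ).comp hlevel)
  simpa [klBound] using hmin.add (Real.tendsto_exp_neg_atTop_nhds_zero.const_mul r)

theorem classKL_klBound (hBc : ContinuousOn B (Ici 0)) (hc : 0 < c) :
    ClassKL (klBound φ B C c) := by
  refine ⟨klBound_continuousOn hBm hB0 hφ hBc, fun r u hr _ => ?_,
    fun u _ => ⟨fun r hr r' _ hrr' => ?_, klBound_zero hBm hB0 hφ u⟩,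
    fun r hr u u' _ huu' hpos => ?_, fun r hr => tendsto_klBound_atTop hBm hB0 hφ hc hr⟩
  · exact add_nonneg (le_min (hB0 ▸ hBm hr) (lyapInv_decayLevel_nonneg hBm hB0 hφ hr u))
      (mul_nonneg hr (Real.exp_pos _).le)
  · exact add_lt_add_of_le_of_lt
      (min_le_min (hBm hrr'.le) (lyapInv_decayLevel_mono hBm hB0 hφ hr hrr'.le u))
      (mul_lt_mul_of_pos_right hrr' (Real.exp_pos _))
  · rcases hr.eq_or_lt with rfl | hr
    · exact absurd (klBound_zero hBm hB0 hφ u) hpos.ne'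
    exact add_lt_add_of_le_of_lt
      (min_le_min le_rfl (lyapInv_decayLevel_anti hBm hB0 hφ hc.le hr.le huu'.le))
      (mul_lt_mul_of_pos_left (Real.exp_lt_exp.2 (neg_lt_neg huu')) hr)

theorem le_klBound {r x u : ℝ} (hr : 0 ≤ r) (hrB : r ≤ B r) (hx : 0 ≤ x) (hxB : x ≤ B r)
    (hV : 0 < x → lyap φ x ≤ lyap φ r + C - c * u) : x ≤ klBound φ B C c r u := by
  refine le_add_of_le_of_nonneg (le_min hxB ?_) (mul_nonneg hr (Real.exp_pos _).le)
  rcases hx.eq_or_lt with rfl | hx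
  · exact lyapInv_decayLevel_nonneg hBm hB0 hφ hr u
  have hr0 : 0 < r := hr.lt_of_ne <| by
    rintro rfl
    rw [hB0] at hxB
    exact hx.not_ge hxB
  refine le_lyapInv hφ (one_add_pos_of_monotone hBm hB0 hr) (decayLevel_le r u) hx ?_
  rcases le_total (c * u - C) 0 with hu | hu
  · rw [decayLevel, max_eq_right hu, sub_zero]
    exact lyap_le_lyap hφ hx (by linarith)
  · rw [decayLevel, max_eq_left hu]
    linarith [hV hx, lyap_le_lyap hφ hr0 (by linarith : r ≤ 1 + B r)]

end KLBound

/-- Once `c u > C`, the Lyapunov bound forces `z(t) < z₀`; before that, at most `⌊C / c⌋`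
impulses have occurred. -/
theorem le_envelope_iterate_floor {φ ψ : ℝ → ℝ} (hφ : ClassP φ) (hψ : ClassP ψ) {C c : ℝ}
    (hc : 0 < c) {n : ℕ} {r x u : ℝ} (hr : 0 ≤ r) (hxn : x ≤ (envelope ψ)^[n] r)
    (hnu : (n : ℝ) ≤ u) (hV : 0 < x → lyap φ x ≤ lyap φ r + C - c * u) :
    x ≤ (envelope ψ)^[⌊C / c⌋₊] r := by
  have hid : id ≤ envelope ψ := le_envelope
  rcases le_or_gt u (C / c) with hu | hu
  · exact hxn.trans (Function.monotone_iterate_of_id_le hid (Nat.le_floor (hnu.trans hu)) r)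
  refine le_trans ?_ (Function.id_le_iterate_of_id_le hid _ r)
  rcases le_or_gt x 0 with hx | hx
  · exact hx.trans hr
  have hr0 : 0 < r := hr.lt_of_ne <| by
    rintro rfl
    rw [Function.iterate_fixed (envelope_zero hψ)] at hxn
    exact hx.not_ge hxn
  have : C < c * u := by rwa [div_lt_iff₀ hc, mul_comm] at hu
  exact (((lyap_strictMonoOn hφ).lt_iff_lt hx hr0).1 (by linarith [hV hx])).le

/-- Proposition 1 a): if `ψ, φ` are of class `P`, `p` is nonnegative and locally
integrable, `θ > 0` satisfies `M < N`, and `M > 0`, then the comparison system is strongly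
GUAS uniformly over every uniform subset `S` of `Sup(1/θ)`. -/
theorem prop1a (φ ψ p : ℝ → ℝ) (θ : ℝ) (hφ : ClassP φ) (hψ : ClassP ψ)
    (hp : LocIntNN p) (hθ : 0 < θ) (hMN : Mval φ ψ < Nval p θ) (hM : 0 < Mval φ ψ)
    (S : Set (Set ℝ)) (hS : USubSup (1 / θ) S) :
    StrongGUAS p φ ψ S := by
  obtain ⟨C, c, hc, hdecay⟩ := hS.exists_linear_decay hθ hM hMN
  set B := (envelope ψ)^[⌊C / c⌋₊]
  have hBm : Monotone B := (envelope_monotone hψ).iterate _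
  have hB0 : B 0 = 0 := Function.iterate_fixed (envelope_zero hψ) _
  refine ⟨klBound φ B C c, classKL_klBound hBm hB0 hφ (envelope_iterate_continuousOn hψ _) hc, ?_⟩
  intro γ hγS t0 ht0 z0 hz0 T z hsol t ht htT
  have hγ := hS.1 γ hγS
  have hV : 0 < z t → lyap φ (z t) ≤ lyap φ z0 + C - c * (t - t0 + impCnt γ t0 t) := fun hzt =>
    calc lyap φ (z t)
        ≤ lyap φ z0 + impCnt γ t0 t * Mval φ ψ - ∫ x in t0..t, p x :=
          hsol.lyap_le hφ hp ht0 hψ hγ (fun a ha => lyap_apply_le_add_Mval hφ hψ hM ha) t ht htT hzt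
      _ ≤ lyap φ z0 + impCnt γ t0 t * Mval φ ψ - ((t - t0) / θ - 1) * Nval p θ := by
          gcongr
          exact le_integral_of_le_window_integral hp hθ (hM.trans hMN).le
            (fun s hs => Nval_le_integral hp hθ.le hs) ht0 ht
      _ ≤ lyap φ z0 + C - c * (t - t0 + impCnt γ t0 t) := by
          linarith [hdecay γ hγS t0 t ht0 ht]
  have hzB : z t ≤ B z0 := le_envelope_iterate_floor hφ hψ hc hz0
    (hsol.le_envelope_iterate hφ hp ht0 hψ hγ t ht htT) (by linarith) hV
  exact le_klBound hBm hB0 hφ hz0 (Function.id_le_iterate_of_id_le le_envelope _ z0)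
    (hsol.nonneg t ht htT) hzB hV
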